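/- arXiv:2104.11971 — 3 statements merged into one kernel-verified Lean document; each statement's English description precedes it below -/
import Mathlib

section
/- Let n ≥ 3 be an integer and let m be an integer with 1 ≤ m ≤ n−2. Then q_m ≥ q_{m+1} if and only if ∫_{0}^{1} (1 + t/m)^{m+1} (1 − t/(n−m))^{n−m−2} dt ≥ (n−m)/(n−m−1). -/
/-!
Write `F_m(p) = P(B(n, p) ≤ m)`. Differentiating in `p` telescopes to
`F_m'(p) = -(n - m) C(n, m) p^m (1 - p)^(n-m-1)`, so
`q_m - q_{m+1} = F_{m+1}(m/n) - F_{m+1}((m+1)/n) - P(B(n, m/n) = m + 1)` is an incomplete beta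
integral over `[m/n, (m+1)/n]` minus a point mass. The substitution `p = (m + t)/n` turns the
integral into `∫_0^1 (1 + t/m)^(m+1) (1 - t/(n-m))^(n-m-2) dt`, with the same positive factor
`C(n, m+1) (m/n)^(m+1) ((n-m)/n)^(n-m-2) / n` in front as the point mass, and the sign of
`q_m - q_{m+1}` becomes that of `(n - m - 1) ∫ … - (n - m)`.
-/

open Finset intervalIntegral

noncomputable def binomialCDF (n m : ℕ) (p : ℝ) : ℝ :=
  ∑ k ∈ range (m + 1), (n.choose k : ℝ) * p ^ k * (1 - p) ^ (n - k)

lemma binomialCDF_succ (n m : ℕ) (p : ℝ) :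
    binomialCDF n (m + 1) p =
      binomialCDF n m p + n.choose (m + 1) * p ^ (m + 1) * (1 - p) ^ (n - (m + 1)) :=
  sum_range_succ _ _

lemma hasDerivAt_binomialCDF (n m : ℕ) (p : ℝ) :
    HasDerivAt (binomialCDF n m)
      (-(((n - m : ℕ) : ℝ) * n.choose m * p ^ m * (1 - p) ^ (n - m - 1))) p := by
  induction m with
  | zero =>
    have hF : binomialCDF n 0 = fun p => (1 - p) ^ n := by
      funext p
      simp [binomialCDF]
    rw [hF]
    refine (((hasDerivAt_id p).const_sub 1).pow n).congr_deriv ?_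
    simp
  | succ m ih =>
    have hterm := ((hasDerivAt_pow (m + 1) p).mul
      (((hasDerivAt_id p).const_sub 1).pow (n - (m + 1)))).const_mul (n.choose (m + 1) : ℝ)
    have hchoose : (n.choose (m + 1) : ℝ) * (m + 1) = n.choose m * ((n - m : ℕ) : ℝ) := by
      exact_mod_cast Nat.choose_succ_right_eq n m
    have hF : binomialCDF n (m + 1) = fun p =>
        binomialCDF n m p + n.choose (m + 1) * (p ^ (m + 1) * (1 - p) ^ (n - (m + 1))) :=
      funext fun p => by rw [binomialCDF_succ, mul_assoc]
    rw [hF]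
    refine (ih.add hterm).congr_deriv ?_
    rw [show n - m - 1 = n - (m + 1) by omega]
    simp only [id, Pi.pow_apply, Nat.add_sub_cancel]
    push_cast
    linear_combination (p ^ m * (1 - p) ^ (n - (m + 1))) * hchoose

lemma binomialCDF_sub_binomialCDF (n m : ℕ) (a b : ℝ) :
    binomialCDF n m a - binomialCDF n m b =
      ((n - m : ℕ) : ℝ) * n.choose m * ∫ p in a..b, p ^ m * (1 - p) ^ (n - m - 1) := by
  rw [← integral_const_mul, ← neg_sub, ← integral_eq_sub_of_hasDerivAt
    (fun p _ => hasDerivAt_binomialCDF n m p)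
    ((by fun_prop : Continuous _).intervalIntegrable _ _),
    ← integral_neg]
  congr 1
  funext p
  ring

lemma integral_pow_mul_one_sub_pow_eq {x N : ℝ} (hx : x ≠ 0) (hN : N ≠ 0) (hxN : N - x ≠ 0)
    (j k : ℕ) :
    ∫ p in x / N..(x + 1) / N, p ^ j * (1 - p) ^ k =
      (x / N) ^ j * ((N - x) / N) ^ k / N *
        ∫ t in (0 : ℝ)..1, (1 + t / x) ^ j * (1 - t / (N - x)) ^ k := by
  have hpt (t : ℝ) :
      (x / N) ^ j * ((N - x) / N) ^ k * ((1 + t / x) ^ j * (1 - t / (N - x)) ^ k) =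
        (x / N + t / N) ^ j * (1 - (x / N + t / N)) ^ k := by
    rw [mul_mul_mul_comm, ← mul_pow, ← mul_pow]
    congr 2
    · field_simp
    · field_simp
      ring
  rw [div_mul_eq_mul_div, ← integral_const_mul, integral_congr (fun t _ => hpt t),
    integral_comp_add_div (fun p => p ^ j * (1 - p) ^ k) hN, smul_eq_mul,
    mul_div_cancel_left₀ _ hN]
  congr 1 <;> ring

lemma binomialCDF_div_sub_binomialCDF_succ_div {n m : ℕ} (hm : 0 < m) (hmn : m + 2 ≤ n) :
    binomialCDF n m (m / n) - binomialCDF n (m + 1) ((m + 1) / n) =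
      n.choose (m + 1) * ((m : ℝ) / n) ^ (m + 1) * (((n : ℝ) - m) / n) ^ (n - m - 2) / n *
        (((n : ℝ) - m - 1) *
            (∫ t in (0 : ℝ)..1,
              (1 + t / (m : ℝ)) ^ (m + 1) * (1 - t / ((n : ℝ) - m)) ^ (n - m - 2)) -
          ((n : ℝ) - m)) := by
  have hm0 : (m : ℝ) ≠ 0 := by positivity
  have hn0 : (n : ℝ) ≠ 0 := Nat.cast_ne_zero.mpr (by omega)
  have hnm : (n : ℝ) - m ≠ 0 := sub_ne_zero.mpr (by exact_mod_cast (by omega : n ≠ m))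
  have hcoeff : ((n - (m + 1) : ℕ) : ℝ) = n - m - 1 := by
    push_cast [Nat.cast_sub (by omega : m + 1 ≤ n)]
    ring
  have hFTC := binomialCDF_sub_binomialCDF n (m + 1) (m / n) ((m + 1) / n)
  rw [hcoeff, show n - (m + 1) - 1 = n - m - 2 by omega,
    integral_pow_mul_one_sub_pow_eq hm0 hn0 hnm] at hFTC
  have hsucc := binomialCDF_succ n m (m / n)
  rw [show n - (m + 1) = n - m - 2 + 1 by omega,
    show 1 - (m : ℝ) / n = (n - m) / n by field_simp] at hsucc
  linear_combination hFTC - hsucc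

theorem qm_ge_qm1_iff_integral_t_general (n : ℕ) (q : ℕ → ℝ)
    (hq : ∀ m, q m =
      ∑ k ∈ Finset.range (m + 1),
        (n.choose k : ℝ) * ((m : ℝ) / n) ^ k * (1 - (m : ℝ) / n) ^ (n - k)) :
    ∀ m, 1 ≤ m → m ≤ n - 2 →
      (q m ≥ q (m + 1) ↔
        (∫ t in (0:ℝ)..1,
            (1 + t / (m : ℝ)) ^ (m + 1) *
              (1 - t / ((n : ℝ) - m)) ^ (n - m - 2)) ≥
          ((n : ℝ) - m) / ((n : ℝ) - m - 1)) := by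
  intro m hm1 hm2
  have hq_eq :
      q m - q (m + 1) = binomialCDF n m (m / n) - binomialCDF n (m + 1) ((m + 1) / n) := by
    rw [hq, hq]
    push_cast
    rfl
  have hgap : (0 : ℝ) < n - m - 1 := by
    rw [sub_sub, sub_pos]
    exact_mod_cast (by omega : m + 1 < n)
  have hfactor : (0 : ℝ) <
      n.choose (m + 1) * ((m : ℝ) / n) ^ (m + 1) * (((n : ℝ) - m) / n) ^ (n - m - 2) / n := by
    have hchoose : (0 : ℝ) < n.choose (m + 1) := by exact_mod_cast Nat.choose_pos (by omega)
    have hm : (0 : ℝ) < m := by exact_mod_cast hm1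
    have hnm : (0 : ℝ) < n - m := by linarith
    have hn : (0 : ℝ) < n := by linarith
    positivity
  rw [ge_iff_le, ← sub_nonneg, hq_eq, binomialCDF_div_sub_binomialCDF_succ_div hm1 (by omega),
    mul_nonneg_iff_of_pos_left hfactor, sub_nonneg, ge_iff_le, div_le_iff₀' hgap]

/-- For `n ≥ 3` and `1 ≤ m ≤ n-2`, one has `q m ≥ q (m+1)` iff
`∫_0^1 (1 + t/m)^{m+1} (1 - t/(n-m))^{n-m-2} dt ≥ (n-m)/(n-m-1)`. -/
theorem qm_ge_qm1_iff_integral_t (n : ℕ) (hn : 3 ≤ n) (q : ℕ → ℝ)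
    (hq : ∀ m, q m =
      ∑ k ∈ Finset.range (m + 1),
        (n.choose k : ℝ) * ((m : ℝ) / n) ^ k * (1 - (m : ℝ) / n) ^ (n - k)) :
    ∀ m, 1 ≤ m → m ≤ n - 2 →
      (q m ≥ q (m + 1) ↔
        (∫ t in (0:ℝ)..1,
            (1 + t / (m : ℝ)) ^ (m + 1) *
              (1 - t / ((n : ℝ) - m)) ^ (n - m - 2)) ≥
          ((n : ℝ) - m) / ((n : ℝ) - m - 1)) :=
  qm_ge_qm1_iff_integral_t_general n q hq
end

section
/- Let n ≥ 2 be an integer and let m be an integer with 0 ≤ m ≤ n−2. Then q_m ≥ q_{m+1} if and only if ∫_{0}^{1} (1 − v/(m+1))^{m} (1 + v/(n−m−1))^{n−m−1} dv ≥ 1. -/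
/-!
Write `b n k = C(n,k) X^k (1-X)^(n-k)` for the Bernstein polynomials, so that
`q m = (∑_{k ≤ m} b n k)(m/n)`. The derivative of the partial sum `∑_{k ≤ m} b n k` telescopes to
`-n b (n-1) m`, and `b n (m+1)` agrees with `b (n-1) m` at `(m+1)/n`; hence
`q m - q (m+1) = n ∫_{m/n}^{(m+1)/n} b (n-1) m - b (n-1) m ((m+1)/n)`. Under `x = (m+1-v)/n` the
ratio `b (n-1) m x / b (n-1) m ((m+1)/n)` is exactly the integrand of the statement, so
`q m - q (m+1) = b (n-1) m ((m+1)/n) * (J - 1)`, `J` the integral, with a positive factor in front.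
-/

open Polynomial intervalIntegral

namespace bernsteinPolynomial

variable (R : Type*) [CommRing R]

theorem eval_eq (n ν : ℕ) (x : R) :
    (bernsteinPolynomial R n ν).eval x = n.choose ν * x ^ ν * (1 - x) ^ (n - ν) := by
  simp [bernsteinPolynomial]

theorem derivative_sum_range (n m : ℕ) :
    derivative (∑ k ∈ Finset.range (m + 1), bernsteinPolynomial R n k) =
      -(n : R[X]) * bernsteinPolynomial R (n - 1) m := by
  induction m with
  | zero => simp [derivative_zero]
  | succ m ih =>
    rw [Finset.sum_range_succ, derivative_add, ih, derivative_succ]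
    ring

theorem add_one_mul_add_one (n ν : ℕ) :
    ((ν + 1 : ℕ) : R[X]) * bernsteinPolynomial R (n + 1) (ν + 1) =
      ((n + 1 : ℕ) : R[X]) * X * bernsteinPolynomial R n ν := by
  have h : (((n + 1).choose (ν + 1) * (ν + 1) : ℕ) : R[X]) = ((n + 1) * n.choose ν : ℕ) :=
    congrArg _ (Nat.add_one_mul_choose_eq n ν).symm
  simp only [bernsteinPolynomial, Nat.add_sub_add_right]
  push_cast at h ⊢
  linear_combination X ^ (ν + 1) * (1 - X) ^ (n - ν) * h

end bernsteinPolynomial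

open bernsteinPolynomial

theorem mul_integral_eval_bernsteinPolynomial (n m : ℕ) (a b : ℝ) :
    n * ∫ x in a..b, (bernsteinPolynomial ℝ (n - 1) m).eval x =
      (∑ k ∈ Finset.range (m + 1), bernsteinPolynomial ℝ n k).eval a -
        (∑ k ∈ Finset.range (m + 1), bernsteinPolynomial ℝ n k).eval b := by
  set F := ∑ k ∈ Finset.range (m + 1), bernsteinPolynomial ℝ n k
  have hF := integral_eq_sub_of_hasDerivAt (fun x _ => F.hasDerivAt x)
    (F.derivative.continuous.intervalIntegrable a b)
  rw [derivative_sum_range] at hF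
  simp only [eval_mul, eval_neg, eval_natCast, neg_mul, integral_neg, integral_const_mul] at hF
  linarith

section

variable {n m : ℕ}

theorem eval_bernsteinPolynomial_succ_div (hn : n ≠ 0) (m : ℕ) :
    (bernsteinPolynomial ℝ n (m + 1)).eval (((m : ℝ) + 1) / n) =
      (bernsteinPolynomial ℝ (n - 1) m).eval (((m : ℝ) + 1) / n) := by
  obtain ⟨n, rfl⟩ := Nat.exists_eq_add_one_of_ne_zero hn
  have h := congrArg (eval (((m : ℝ) + 1) / (n + 1))) (add_one_mul_add_one ℝ n m)
  simp only [eval_mul, eval_natCast, eval_X] at h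
  push_cast at h ⊢
  field_simp at h
  exact h

theorem eval_bernsteinPolynomial_sub_div (hm : m + 1 < n) (v : ℝ) :
    (bernsteinPolynomial ℝ (n - 1) m).eval (((m : ℝ) + 1) / n - v / n) =
      (bernsteinPolynomial ℝ (n - 1) m).eval (((m : ℝ) + 1) / n) *
        ((1 - v / (m + 1)) ^ m * (1 + v / ((n : ℝ) - m - 1)) ^ (n - m - 1)) := by
  have hn : (n : ℝ) ≠ 0 := by exact_mod_cast (show n ≠ 0 by omega)
  have hr : (n : ℝ) - m - 1 ≠ 0 := by
    have : (m : ℝ) + 1 < n := by exact_mod_cast hm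
    linarith
  have hx : ((m : ℝ) + 1) / n - v / n = (m + 1) / n * (1 - v / (m + 1)) := by
    field_simp
  have hx' : 1 - (((m : ℝ) + 1) / n - v / n) = (1 - (m + 1) / n) * (1 + v / (n - m - 1)) := by
    field_simp
    ring
  rw [eval_eq, eval_eq, hx', hx, mul_pow, mul_pow, Nat.sub_right_comm]
  ring

theorem eval_mul_integral_eq (hm : m + 1 < n) :
    (bernsteinPolynomial ℝ (n - 1) m).eval (((m : ℝ) + 1) / n) *
        ∫ v in (0 : ℝ)..1, (1 - v / (m + 1)) ^ m * (1 + v / ((n : ℝ) - m - 1)) ^ (n - m - 1) =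
      n * ∫ x in (m : ℝ) / n..(m + 1) / n, (bernsteinPolynomial ℝ (n - 1) m).eval x := by
  have hn : (n : ℝ) ≠ 0 := by exact_mod_cast (show n ≠ 0 by omega)
  rw [← integral_const_mul]
  simp_rw [← eval_bernsteinPolynomial_sub_div hm]
  rw [integral_comp_sub_div (fun x => (bernsteinPolynomial ℝ (n - 1) m).eval x) hn, smul_eq_mul]
  congr 2 <;> field_simp <;> ring

theorem eval_sum_range_sub_eval_sum_range_succ (hn : n ≠ 0) (m : ℕ) :
    (∑ k ∈ Finset.range (m + 1), bernsteinPolynomial ℝ n k).eval ((m : ℝ) / n) -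
        (∑ k ∈ Finset.range (m + 2), bernsteinPolynomial ℝ n k).eval (((m : ℝ) + 1) / n) =
      n * (∫ x in (m : ℝ) / n..(m + 1) / n, (bernsteinPolynomial ℝ (n - 1) m).eval x) -
        (bernsteinPolynomial ℝ (n - 1) m).eval (((m : ℝ) + 1) / n) := by
  rw [Finset.sum_range_succ _ (m + 1), eval_add, eval_bernsteinPolynomial_succ_div hn,
    mul_integral_eval_bernsteinPolynomial]
  ring

theorem eval_bernsteinPolynomial_pos {x : ℝ} (hm : m ≤ n) (hx₀ : 0 < x) (hx₁ : x < 1) :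
    0 < (bernsteinPolynomial ℝ n m).eval x := by
  rw [eval_eq]
  have := Nat.choose_pos hm
  have : 0 < 1 - x := by linarith
  positivity

end

/-- For `n ≥ 2` and `0 ≤ m ≤ n-2`, one has `q m ≥ q (m+1)` iff
`∫_0^1 (1 - v/(m+1))^m (1 + v/(n-m-1))^{n-m-1} dv ≥ 1`. -/
theorem qm_ge_qm1_iff_integral_v (n : ℕ) (hn : 2 ≤ n) (q : ℕ → ℝ)
    (hq : ∀ m, q m =
      ∑ k ∈ Finset.range (m + 1),
        (n.choose k : ℝ) * ((m : ℝ) / n) ^ k * (1 - (m : ℝ) / n) ^ (n - k)) :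
    ∀ m ≤ n - 2,
      (q m ≥ q (m + 1) ↔
        (∫ v in (0:ℝ)..1,
            (1 - v / ((m : ℝ) + 1)) ^ m *
              (1 + v / ((n : ℝ) - m - 1)) ^ (n - m - 1)) ≥ 1) := by
  intro m hm
  have hmn : m + 1 < n := by omega
  have hq_eval : ∀ m, q m =
      (∑ k ∈ Finset.range (m + 1), bernsteinPolynomial ℝ n k).eval ((m : ℝ) / n) := by
    simp [hq, eval_finsetSum, eval_eq]
  have hdiff : q m - q (m + 1) = (bernsteinPolynomial ℝ (n - 1) m).eval (((m : ℝ) + 1) / n) *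
      ((∫ v in (0 : ℝ)..1,
        (1 - v / ((m : ℝ) + 1)) ^ m * (1 + v / ((n : ℝ) - m - 1)) ^ (n - m - 1)) - 1) := by
    rw [hq_eval, hq_eval, mul_sub, eval_mul_integral_eq hmn, mul_one,
      ← eval_sum_range_sub_eval_sum_range_succ (by omega)]
    push_cast
    rfl
  have hpos : 0 < (bernsteinPolynomial ℝ (n - 1) m).eval (((m : ℝ) + 1) / n) := by
    have hn' : (m : ℝ) + 1 < n := by exact_mod_cast hmn
    exact eval_bernsteinPolynomial_pos (by omega) (by positivity) ((div_lt_one (by linarith)).2 hn')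
  rw [ge_iff_le, ge_iff_le, ← sub_nonneg, hdiff, ← sub_nonneg (b := 1)]
  exact mul_nonneg_iff_of_pos_left hpos
end

section
/- For every integer s ≥ 1, the integral H_2 = ∫_{0}^{1} (1 − v/(2s+2))^{2s+1} (1 + v/s)^{s} dv satisfies H_2 < 1. -/
/-!
Write `x = v/(2s+2)` and `q = (1-x)²(1+v/s)`, so that the integrand is `(1-x) q^s`.
On `[0,1]` one has `s(q-1) ≤ W := (v - 3v²/4)/(s+1) ∈ [0,1]`, hence
`q^s ≤ e^{s(q-1)} ≤ e^W ≤ 1 + W + W²`. The polynomial majorant `(1-x)(1+W+W²)` integrates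
to `1 - u²/480 - 7u³/320` with `u = 1/(s+1)`, which is `< 1`.
-/

open Real intervalIntegral

lemma pow_le_one_add_add_sq {q W : ℝ} (n : ℕ) (hq : 0 ≤ q) (hW : |W| ≤ 1)
    (h : n * (q - 1) ≤ W) : q ^ n ≤ 1 + W + W ^ 2 :=
  calc q ^ n ≤ exp (q - 1) ^ n := by gcongr; linarith [add_one_le_exp (q - 1)]
    _ = exp (n * (q - 1)) := (exp_nat_mul _ n).symm
    _ ≤ exp W := exp_le_exp.mpr h
    _ ≤ 1 + W + W ^ 2 := by linarith [(abs_le.mp (abs_exp_sub_one_sub_id_le hW)).2]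

lemma mul_sq_one_sub_mul_one_add_sub_one_le {t v : ℝ} (ht : 0 < t) (hv : v ≤ 1) :
    t * ((1 - v / (2 * t + 2)) ^ 2 * (1 + v / t) - 1) ≤ (v - 3 * v ^ 2 / 4) / (t + 1) := by
  have defect : (v - 3 * v ^ 2 / 4) / (t + 1) - t * ((1 - v / (2 * t + 2)) ^ 2 * (1 + v / t) - 1)
      = v ^ 2 * (1 - v) / (4 * (t + 1) ^ 2) := by
    field_simp
    ring
  have : 0 ≤ v ^ 2 * (1 - v) / (4 * (t + 1) ^ 2) := by
    have : 0 ≤ 1 - v := by linarith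
    positivity
  linarith

noncomputable def majorant (u v : ℝ) : ℝ :=
  (1 - u * v / 2) * (1 + u * (v - 3 * v ^ 2 / 4) + (u * (v - 3 * v ^ 2 / 4)) ^ 2)

lemma integrand_le_majorant {s : ℕ} (hs : 0 < s) {v : ℝ} (hv₀ : 0 ≤ v) (hv₁ : v ≤ 1) :
    (1 - v / (2 * (s : ℝ) + 2)) ^ (2 * s + 1) * (1 + v / s) ^ s
      ≤ majorant (1 / ((s : ℝ) + 1)) v := by
  have hs' : (0 : ℝ) < s := Nat.cast_pos.mpr hs
  set x := v / (2 * (s : ℝ) + 2) with hx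
  set W := (v - 3 * v ^ 2 / 4) / ((s : ℝ) + 1) with hW
  have hx₁ : 0 ≤ 1 - x := by
    rw [sub_nonneg, hx, div_le_one (by positivity)]
    linarith
  have hW₀ : 0 ≤ W := by
    have : 0 ≤ v - 3 * v ^ 2 / 4 := by nlinarith
    positivity
  have hW₁ : W ≤ 1 := by
    rw [hW, div_le_one (by positivity)]
    nlinarith
  have hq : ((1 - x) ^ 2 * (1 + v / s)) ^ s ≤ 1 + W + W ^ 2 :=
    pow_le_one_add_add_sq s (by positivity) (abs_le.mpr ⟨by linarith, hW₁⟩)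
      (mul_sq_one_sub_mul_one_add_sub_one_le hs' hv₁)
  have hmajorant : majorant (1 / ((s : ℝ) + 1)) v = (1 - x) * (1 + W + W ^ 2) := by
    rw [majorant, hx, hW]
    field_simp
  calc (1 - x) ^ (2 * s + 1) * (1 + v / s) ^ s = (1 - x) * ((1 - x) ^ 2 * (1 + v / s)) ^ s := by
        rw [mul_pow, ← pow_mul, pow_succ']
        ring
    _ ≤ (1 - x) * (1 + W + W ^ 2) := mul_le_mul_of_nonneg_left hq hx₁
    _ = majorant (1 / ((s : ℝ) + 1)) v := hmajorant.symm

lemma integral_zero_one_sum_mul_pow {n : ℕ} (c : Fin n → ℝ) :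
    ∫ v in (0:ℝ)..1, ∑ i, c i * v ^ (i : ℕ) = ∑ i, c i / ((i : ℕ) + 1) := by
  rw [integral_finsetSum fun i _ => (intervalIntegrable_pow i.val).const_mul (c i)]
  simp [integral_pow, div_eq_mul_inv]

lemma integral_majorant (u : ℝ) :
    ∫ v in (0:ℝ)..1, majorant u v = 1 - u ^ 2 / 480 - 7 * u ^ 3 / 320 := by
  have expand : majorant u = fun v => ∑ i, ![1, u / 2, u ^ 2 / 2 - 3 * u / 4,
      -(9 * u ^ 2 / 8) - u ^ 3 / 2, 9 * u ^ 2 / 16 + 3 * u ^ 3 / 4, -(9 * u ^ 3 / 32)] i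
        * v ^ (i : ℕ) := by
    ext v
    simp [Fin.sum_univ_six, majorant]
    ring
  rw [expand, integral_zero_one_sum_mul_pow]
  simp [Fin.sum_univ_six]
  ring

/-- For every integer `s ≥ 1`,
`H_2 = ∫_0^1 (1 - v/(2s+2))^{2s+1} (1 + v/s)^s dv < 1`. -/
theorem H2_lt_one (s : ℕ) (hs : 1 ≤ s) :
    (∫ v in (0:ℝ)..1,
        (1 - v / (2 * (s : ℝ) + 2)) ^ (2 * s + 1) * (1 + v / (s : ℝ)) ^ s) < 1 := by
  set u : ℝ := 1 / ((s : ℝ) + 1)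
  have hu : 0 < u := by positivity
  calc (∫ v in (0:ℝ)..1, (1 - v / (2 * (s : ℝ) + 2)) ^ (2 * s + 1) * (1 + v / (s : ℝ)) ^ s)
      ≤ ∫ v in (0:ℝ)..1, majorant u v :=
        integral_mono_on zero_le_one (Continuous.intervalIntegrable (by fun_prop) _ _)
          (Continuous.intervalIntegrable (by unfold majorant; fun_prop) _ _)
          fun v hv => integrand_le_majorant hs hv.1 hv.2
    _ = 1 - u ^ 2 / 480 - 7 * u ^ 3 / 320 := integral_majorant u
    _ < 1 := by nlinarith [pow_pos hu 2, pow_pos hu 3]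
end
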